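/- arXiv:1807.09340 — 7 statements merged into one kernel-verified Lean document; each statement's English description precedes it below -/
import Mathlib

section
/- There exists a constrained optimization problem with complementarity constraints that has a feasible complementary solution, yet for every L > 0 the optimal solution of the corresponding L-penalty problem violates complementarity. Concretely: for the problem min -y over {y : 0 ≤ y ≤ 4, 10 - 2y ≥ 0}, the L-penalty problem min -y + (L/2)(y + 10 - 2y) has unique optimum y = 4 for every L > 0, and 4·(10 - 2·4) = 8 ≠ 0, while y = 0 is feasible and complementary. -/
/-- Counterexample to Theorem 3 of Siddiqui–Gabriel: for the problem
`min -y` over `{y : 0 ≤ y ≤ 4, 10 - 2y ≥ 0}`, the `L`-penalty problem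
`min -y + (L/2)(y + 10 - 2y)` has unique optimum `y = 4` for every `L > 0`,
which violates complementarity (`4·(10-8) = 8 ≠ 0`), while `y = 0` is feasible
and complementary. -/
theorem L_penalty_never_recovers_complementarity :
    (∀ L : ℝ, 0 < L →
      (∀ y : ℝ, 0 ≤ y → y ≤ 4 → 0 ≤ 10 - 2 * y →
        -(4 : ℝ) + L / 2 * (4 + 10 - 2 * 4) ≤ -y + L / 2 * (y + 10 - 2 * y)) ∧
      (∀ y : ℝ, 0 ≤ y → y ≤ 4 → 0 ≤ 10 - 2 * y →
        -y + L / 2 * (y + 10 - 2 * y) = -(4 : ℝ) + L / 2 * (4 + 10 - 2 * 4) →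
        y = 4)) ∧
    (4 : ℝ) * (10 - 2 * 4) ≠ 0 ∧
    ((0 : ℝ) ≤ 0 ∧ (0 : ℝ) ≤ 4 ∧ (0 : ℝ) ≤ 10 - 2 * 0 ∧
      (0 : ℝ) * (10 - 2 * 0) = 0) := by
  refine ⟨fun L hL => ⟨fun y hy hy4 hg => by nlinarith, fun y hy hy4 hg h => by nlinarith⟩, by norm_num, by norm_num⟩
end

section
/- Let Γ ⊆ ℝⁿ be nonempty, f, p : Γ → ℝ, and let z⁰ ∈ Γ be a lexicographic minimum with respect to (p, f). Suppose z⁰ is properly efficient with trade-off bound L̄ > 0, meaning: for all w ∈ Γ with f(w) < f(z⁰) and p(w) > p(z⁰), (f(z⁰) - f(w))/(p(w) - p(z⁰)) ≤ L̄. Then for every L > L̄, z⁰ minimizes f + L·p over Γ. -/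
/-- Theorem 4 of the corrigendum: a lexicographic minimum with respect to
`(p, f)` that is properly efficient with trade-off bound `L̄ > 0` minimizes
`f + L·p` over `Γ` for every `L > L̄`. -/
theorem lex_min_minimizes_penalty {n : ℕ} (Γ : Set (Fin n → ℝ))
    (f p : (Fin n → ℝ) → ℝ) (hΓ : Γ.Nonempty) (z₀ : Fin n → ℝ) (hz₀ : z₀ ∈ Γ)
    (hlex1 : ∀ w ∈ Γ, p z₀ ≤ p w)
    (hlex2 : ∀ w ∈ Γ, p w = p z₀ → f z₀ ≤ f w)
    (Lbar : ℝ) (hLbar : 0 < Lbar)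
    (hproper : ∀ w ∈ Γ, f w < f z₀ → p z₀ < p w →
      (f z₀ - f w) / (p w - p z₀) ≤ Lbar) :
    ∀ L : ℝ, Lbar < L → ∀ w ∈ Γ, f z₀ + L * p z₀ ≤ f w + L * p w := by
  intro L hL w hw
  have hp := hlex1 w hw
  rcases eq_or_lt_of_le hp with heq | hlt
  · have := hlex2 w hw heq.symm
    nlinarith
  · rcases le_or_gt (f z₀) (f w) with hf | hf
    · nlinarith
    · have h := hproper w hw hf hlt
      have hpos : 0 < p w - p z₀ := by linarith
      rw [div_le_iff₀ hpos] at h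
      nlinarith
end

section
/- Let Γ ⊆ ℝⁿ, f, p : Γ → ℝ, z⁰ ∈ Γ a lexicographic minimum with respect to (p, f) that is properly efficient with trade-off bound L̄ > 0, and suppose z⁰ satisfies a predicate C (e.g., complementarity). Then for every L > L̄ there exists a minimizer of f + L·p over Γ satisfying C, namely z⁰ itself. -/
/-- If a lexicographic minimum `z₀` w.r.t. `(p, f)`, properly efficient with
trade-off bound `L̄ > 0`, satisfies a predicate `C`, then for every `L > L̄`
there is a minimizer of `f + L·p` over `Γ` satisfying `C`, namely `z₀`. -/
theorem penalty_minimizer_satisfying_C {n : ℕ} (Γ : Set (Fin n → ℝ))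
    (f p : (Fin n → ℝ) → ℝ) (C : (Fin n → ℝ) → Prop)
    (hΓ : Γ.Nonempty) (z₀ : Fin n → ℝ) (hz₀ : z₀ ∈ Γ)
    (hlex1 : ∀ w ∈ Γ, p z₀ ≤ p w)
    (hlex2 : ∀ w ∈ Γ, p w = p z₀ → f z₀ ≤ f w)
    (Lbar : ℝ) (hLbar : 0 < Lbar)
    (hproper : ∀ w ∈ Γ, f w < f z₀ → p z₀ < p w →
      (f z₀ - f w) / (p w - p z₀) ≤ Lbar)
    (hC : C z₀) :
    ∀ L : ℝ, Lbar < L →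
      ∃ z ∈ Γ, C z ∧ ∀ w ∈ Γ, f z + L * p z ≤ f w + L * p w := by
  intro L hL
  refine ⟨z₀, hz₀, hC, ?_⟩
  intro w hw
  rcases le_or_gt (f z₀) (f w) with h1 | h1
  · have := hlex1 w hw
    nlinarith
  · rcases eq_or_lt_of_le (hlex1 w hw) with h2 | h2
    · exact absurd (hlex2 w hw h2.symm) (not_le.mpr h1)
    · have h3 := hproper w hw h1 h2
      have hpos : 0 < p w - p z₀ := by linarith
      have := (div_le_iff₀ hpos).mp h3
      nlinarith
end

section
/- Consider the LP: minimize -x₃ - y₂ subject to 0 ≤ x₃ ≤ 20, 0 ≤ y₂ ≤ 10, g₁ = 10 - x₁ - x₂ ≥ 0, g₂ = x₃ - x₂ ≥ 0, x₁, x₂, y₁, y₂ ≥ 0. The point x = (0,10,10), y = (0,0) is feasible, satisfies g₁ = g₂ = 0 (hence complementarity y₁g₁ + y₂g₂ = 0 trivially), and uniquely lexicographically minimizes (p, f) where p = (y₁ + y₂ + g₁ + g₂)/2 and f = -x₃ - y₂. -/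
/-- Example 3 of the corrigendum: the point `x = (0,10,10)`, `y = (0,0)` is
feasible, satisfies `g₁ = g₂ = 0` (hence complementarity), and uniquely
lexicographically minimizes `(p, f)` with `p = (y₁+y₂+g₁+g₂)/2`,
`f = -x₃ - y₂`. -/
theorem example3_lex_min :
    -- feasibility of the point x = (0,10,10), y = (0,0)
    ((0:ℝ) ≤ 0 ∧ (0:ℝ) ≤ 10 ∧ (0:ℝ) ≤ 10 ∧ (0:ℝ) ≤ 0 ∧ (0:ℝ) ≤ 0 ∧
      (10:ℝ) ≤ 20 ∧ (0:ℝ) ≤ 10 ∧ 0 ≤ (10:ℝ) - 0 - 10 ∧ 0 ≤ (10:ℝ) - 10) ∧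
    -- g₁ = g₂ = 0 and complementarity
    ((10:ℝ) - 0 - 10 = 0 ∧ (10:ℝ) - 10 = 0 ∧
      (0:ℝ) * (10 - 0 - 10) + 0 * (10 - 10) = 0) ∧
    -- p is minimized (minimum value 0) at the point
    (∀ x₁ x₂ x₃ y₁ y₂ : ℝ, 0 ≤ x₁ → 0 ≤ x₂ → 0 ≤ x₃ → 0 ≤ y₁ → 0 ≤ y₂ →
      x₃ ≤ 20 → y₂ ≤ 10 → 0 ≤ 10 - x₁ - x₂ → 0 ≤ x₃ - x₂ →
      (0 : ℝ) ≤ (y₁ + y₂ + (10 - x₁ - x₂) + (x₃ - x₂)) / 2) ∧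
    -- among the p-minimizers, f is uniquely minimized at the point
    (∀ x₁ x₂ x₃ y₁ y₂ : ℝ, 0 ≤ x₁ → 0 ≤ x₂ → 0 ≤ x₃ → 0 ≤ y₁ → 0 ≤ y₂ →
      x₃ ≤ 20 → y₂ ≤ 10 → 0 ≤ 10 - x₁ - x₂ → 0 ≤ x₃ - x₂ →
      (y₁ + y₂ + (10 - x₁ - x₂) + (x₃ - x₂)) / 2 = 0 →
      (-(10:ℝ) - 0 ≤ -x₃ - y₂ ∧
        (-x₃ - y₂ = -(10:ℝ) - 0 →
          x₁ = 0 ∧ x₂ = 10 ∧ x₃ = 10 ∧ y₁ = 0 ∧ y₂ = 0))) := by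
  refine ⟨by norm_num, by norm_num, ?_, ?_⟩
  · intro x₁ x₂ x₃ y₁ y₂ h1 h2 h3 h4 h5 h6 h7 h8 h9
    linarith
  · intro x₁ x₂ x₃ y₁ y₂ h1 h2 h3 h4 h5 h6 h7 h8 h9 hp
    have hy1 : y₁ = 0 := by linarith
    have hy2 : y₂ = 0 := by linarith
    have hg1 : 10 - x₁ - x₂ = 0 := by linarith
    have hg2 : x₃ - x₂ = 0 := by linarith
    constructor
    · linarith
    · intro hf
      refine ⟨by linarith, by linarith, by linarith, hy1, hy2⟩
end

section
/- Consider the feasible set of Example 1 with K = 10: constraints x₃ - x₄ = x₁ - 7, x₅ - x₆ = x₂ - 3, y₁ = 3, y₁ + y₂ - 10y₃ = 4, g₁ = 10 - x₁ - x₂ ≥ 0, g₂ = x₇ - x₂ ≥ 0, g₃ = 10x₂ ≥ 0, x, y ≥ 0, and complementarity y₁g₁ + y₂g₂ + y₃g₃ = 0. Then the unique point of this set minimizing f = x₃ + x₄ + x₅ + x₆ is x = (7,3,0,0,0,0,3), y = (3,1,0), with optimal value f = 0. -/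
/-- Example 1 of the corrigendum with `K = 10`: over the feasible set with
complementarity, the unique minimizer of `f = x₃+x₄+x₅+x₆` is
`x = (7,3,0,0,0,0,3)`, `y = (3,1,0)`, with optimal value `f = 0`. -/
theorem example1_unique_optimum :
    -- feasibility of the point x = (7,3,0,0,0,0,3), y = (3,1,0)
    ((0:ℝ) - 0 = 7 - 7 ∧ (0:ℝ) - 0 = 3 - 3 ∧ (3:ℝ) = 3 ∧
      (3:ℝ) + 1 - 10 * 0 = 4 ∧ 0 ≤ (10:ℝ) - 7 - 3 ∧ 0 ≤ (3:ℝ) - 3 ∧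
      0 ≤ (10:ℝ) * 3 ∧
      (3:ℝ) * (10 - 7 - 3) + 1 * (3 - 3) + 0 * (10 * 3) = 0) ∧
    -- optimal value f = 0 at the point
    ((0:ℝ) + 0 + 0 + 0 = 0) ∧
    -- optimality and uniqueness
    (∀ x₁ x₂ x₃ x₄ x₅ x₆ x₇ y₁ y₂ y₃ : ℝ,
      0 ≤ x₁ → 0 ≤ x₂ → 0 ≤ x₃ → 0 ≤ x₄ → 0 ≤ x₅ → 0 ≤ x₆ → 0 ≤ x₇ →
      0 ≤ y₁ → 0 ≤ y₂ → 0 ≤ y₃ →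
      x₃ - x₄ = x₁ - 7 → x₅ - x₆ = x₂ - 3 → y₁ = 3 →
      y₁ + y₂ - 10 * y₃ = 4 →
      0 ≤ 10 - x₁ - x₂ → 0 ≤ x₇ - x₂ → 0 ≤ 10 * x₂ →
      y₁ * (10 - x₁ - x₂) + y₂ * (x₇ - x₂) + y₃ * (10 * x₂) = 0 →
      (0 ≤ x₃ + x₄ + x₅ + x₆ ∧
        (x₃ + x₄ + x₅ + x₆ = 0 →
          x₁ = 7 ∧ x₂ = 3 ∧ x₃ = 0 ∧ x₄ = 0 ∧ x₅ = 0 ∧ x₆ = 0 ∧ x₇ = 3 ∧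
          y₁ = 3 ∧ y₂ = 1 ∧ y₃ = 0))) := by
  refine ⟨by norm_num, by norm_num, ?_⟩
  intro x₁ x₂ x₃ x₄ x₅ x₆ x₇ y₁ y₂ y₃ hx1 hx2 hx3 hx4 hx5 hx6 hx7 hy1 hy2 hy3
    h1 h2 h3 h4 hg1 hg2 hg3 hc
  refine ⟨by linarith, fun hf => ?_⟩
  have hx3' : x₃ = 0 := by linarith
  have hx4' : x₄ = 0 := by linarith
  have hx5' : x₅ = 0 := by linarith
  have hx6' : x₆ = 0 := by linarith
  have hx1' : x₁ = 7 := by linarith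
  have hx2' : x₂ = 3 := by linarith
  have t1 : 0 ≤ y₁ * (10 - x₁ - x₂) := mul_nonneg hy1 hg1
  have t2 : 0 ≤ y₂ * (x₇ - x₂) := mul_nonneg hy2 hg2
  have t3 : 0 ≤ y₃ * (10 * x₂) := mul_nonneg hy3 hg3
  have hy3' : y₃ = 0 := by nlinarith
  have hy2' : y₂ = 1 := by linarith
  have hx7' : x₇ = 3 := by nlinarith
  exact ⟨hx1', hx2', hx3', hx4', hx5', hx6', hx7', h3, hy2', hy3'⟩
end

section
/- In Example 1 with K = 10, with relaxed feasible set Γ (constraints x₃ - x₄ = x₁ - 7, x₅ - x₆ = x₂ - 3, y₁ = 3, y₁ + y₂ - 10y₃ = 4, 10 - x₁ - x₂ ≥ 0, x₇ - x₂ ≥ 0, x₂ ≥ 0, x, y ≥ 0), the point x = (7,0,0,0,0,3,0), y = (3,1,0) is a minimizer of f + 1·p where f = x₃+x₄+x₅+x₆ and p = (y₁+y₂+y₃ - x₁ + 8x₂ + x₇ + 10)/2, and it violates complementarity since y₁ = 3 > 0 and g₁ = 10 - x₁ - x₂ = 3 > 0. -/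
/-- Counterexample to Theorem 2 of Siddiqui–Gabriel (`L = 1`, `K = 10`): the
point `x = (7,0,0,0,0,3,0)`, `y = (3,1,0)` minimizes `f + 1·p` over the relaxed
feasible set, but violates complementarity (`y₁ = 3 > 0`, `g₁ = 3 > 0`). -/
theorem counterexample_theorem2 :
    -- feasibility of the point x = (7,0,0,0,0,3,0), y = (3,1,0)
    ((0:ℝ) - 0 = 7 - 7 ∧ (0:ℝ) - 3 = 0 - 3 ∧ (3:ℝ) = 3 ∧
      (3:ℝ) + 1 - 10 * 0 = 4 ∧ 0 ≤ (10:ℝ) - 7 - 0 ∧ 0 ≤ (0:ℝ) - 0 ∧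
      0 ≤ (0:ℝ)) ∧
    -- minimality of f + 1·p at the point
    (∀ x₁ x₂ x₃ x₄ x₅ x₆ x₇ y₁ y₂ y₃ : ℝ,
      0 ≤ x₁ → 0 ≤ x₂ → 0 ≤ x₃ → 0 ≤ x₄ → 0 ≤ x₅ → 0 ≤ x₆ → 0 ≤ x₇ →
      0 ≤ y₁ → 0 ≤ y₂ → 0 ≤ y₃ →
      x₃ - x₄ = x₁ - 7 → x₅ - x₆ = x₂ - 3 → y₁ = 3 →
      y₁ + y₂ - 10 * y₃ = 4 →
      0 ≤ 10 - x₁ - x₂ → 0 ≤ x₇ - x₂ → 0 ≤ x₂ →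
      ((0:ℝ) + 0 + 0 + 3) + (3 + 1 + 0 - 7 + 8 * 0 + 0 + 10) / 2 ≤
        (x₃ + x₄ + x₅ + x₆) +
          (y₁ + y₂ + y₃ - x₁ + 8 * x₂ + x₇ + 10) / 2) ∧
    -- violation of complementarity: y₁ = 3 > 0 and g₁ = 10 - 7 - 0 = 3 > 0
    ((0:ℝ) < 3 ∧ (0:ℝ) < 10 - 7 - 0 ∧ (3:ℝ) * (10 - 7 - 0) ≠ 0) := by
  refine ⟨by norm_num, ?_, by norm_num⟩
  intro x₁ x₂ x₃ x₄ x₅ x₆ x₇ y₁ y₂ y₃ h1 h2 h3 h4 h5 h6 h7 h8 h9 h10 e1 e2 e3 e4 g1 g2 g3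
  linarith
end

section
/- In the linear case, every efficient solution is properly efficient: if Γ = {w ∈ ℝⁿ : Aw ≤ b} is a nonempty polyhedron and f, p are linear functionals, then for every efficient point z of the bicriteria problem (min f, min p) over Γ there exists L̄ > 0 such that for all w ∈ Γ with f(w) < f(z) and p(w) > p(z), (f(z) - f(w))/(p(w) - p(z)) ≤ L̄, and symmetrically for all w ∈ Γ with p(w) < p(z) and f(w) > f(z), (p(z) - p(w))/(f(w) - f(z)) ≤ L̄. -/
/-!
An efficient point `z` minimizes `f` on the face `{p = p z}` of the feasible polyhedron. Farkas'
lemma, applied to the constraints active at `z` together with `±∇p`, turns this into a Lagrange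
multiplier: some `μ` makes `z` minimize `f - μ • p` on the whole polyhedron, so
`f z - f w ≤ -μ * (p w - p z)` bounds the trade-off, and symmetrically with `f` and `p` exchanged.
Farkas' lemma follows from hyperplane separation once finitely generated cones are known to be
closed; that is proved by induction on the number of generators, dropping a generator along a
linear dependency (as in Carathéodory's theorem) until the generators are independent.
-/

open Set
open scoped RealInnerProductSpace Topology

theorem exists_nonneg_add_smul_eq_zero {ι : Type*} [Finite ι] {c g : ι → ℝ} (hc : 0 ≤ c)
    (hg : g ≠ 0) : ∃ t : ℝ, ∃ j, 0 ≤ c + t • g ∧ c j + t * g j = 0 := by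
  wlog hneg : ∃ i, g i < 0 generalizing g
  · obtain ⟨i, hi⟩ := Function.ne_iff.1 hg
    push Not at hneg
    obtain ⟨t, j, hnn, hj⟩ := this (neg_ne_zero.2 hg) ⟨i, by simpa using (hneg i).lt_of_ne' hi⟩
    exact ⟨-t, j, by simpa using hnn, by simpa using hj⟩
  have : Nonempty {i // g i < 0} := let ⟨i, hi⟩ := hneg; ⟨⟨i, hi⟩⟩
  obtain ⟨⟨j, hj⟩, hmin⟩ := Finite.exists_min fun i : {i // g i < 0} => c i / -g i
  have ht : 0 ≤ c j / -g j := div_nonneg (hc j) (by linarith)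
  refine ⟨c j / -g j, j, fun i => ?_, by
    rw [div_neg, neg_mul, div_mul_cancel₀ _ hj.ne, add_neg_cancel]⟩
  show 0 ≤ c i + c j / -g j * g i
  rcases lt_or_ge (g i) 0 with hi | hi
  · have := (le_div_iff₀ (neg_pos.2 hi)).1 (hmin ⟨i, hi⟩)
    linarith
  · have hci : 0 ≤ c i := hc i
    linarith [mul_nonneg ht hi]

namespace PointedCone

variable {E : Type*} [AddCommGroup E] [Module ℝ E]

theorem mem_hull_range_iff {ι : Type*} [Fintype ι] {v : ι → E} {x : E} :
    x ∈ hull ℝ (range v) ↔ ∃ c : ι → ℝ, 0 ≤ c ∧ ∑ i, c i • v i = x := by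
  rw [Submodule.mem_span_range_iff_exists_fun]
  constructor
  · rintro ⟨c, rfl⟩
    exact ⟨fun i => c i, fun i => (c i).2, rfl⟩
  · rintro ⟨c, hc, rfl⟩
    exact ⟨fun i => ⟨c i, hc i⟩, rfl⟩

theorem hull_range_eq_iUnion_of_not_linearIndependent {ι : Type*} [Finite ι] {v : ι → E}
    (hv : ¬ LinearIndependent ℝ v) :
    (hull ℝ (range v) : Set E) = ⋃ j, hull ℝ (range fun i : {i // i ≠ j} => v i.1) := by
  classical
  have := Fintype.ofFinite ι
  obtain ⟨g, hgv, i, hi⟩ := Fintype.not_linearIndependent_iff.1 hv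
  refine (Set.iUnion_subset fun j => Submodule.span_mono ?_).antisymm' fun x hx => ?_
  · exact range_subset_iff.2 fun i => mem_range_self _
  obtain ⟨c, hc, rfl⟩ := mem_hull_range_iff.1 hx
  obtain ⟨t, j, hnn, hj⟩ := exists_nonneg_add_smul_eq_zero hc (g := g) (Function.ne_iff.2 ⟨i, hi⟩)
  refine mem_iUnion.2 ⟨j, mem_hull_range_iff.2 ⟨fun i => c i + t * g i, fun i => hnn i, ?_⟩⟩
  have hsplit := Fintype.sum_eq_add_sum_subtype_ne (fun i => (c i + t * g i) • v i) j
  simp only [hj, zero_smul, zero_add] at hsplit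
  rw [← hsplit]
  simp only [add_smul, Finset.sum_add_distrib, mul_smul, ← Finset.smul_sum, hgv, smul_zero,
    add_zero]

section Topology

variable [TopologicalSpace E] [IsTopologicalAddGroup E] [ContinuousSMul ℝ E] [T2Space E]

theorem isClosed_hull_range_of_linearIndependent {ι : Type*} [Finite ι] {v : ι → E}
    (hv : LinearIndependent ℝ v) : IsClosed (hull ℝ (range v) : Set E) := by
  have := Fintype.ofFinite ι
  have hv' : Topology.IsClosedEmbedding (Fintype.linearCombination ℝ v) :=
    LinearMap.isClosedEmbedding_of_injective
      (LinearMap.ker_eq_bot.2 hv.fintypeLinearCombination_injective)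
  have himage : (hull ℝ (range v) : Set E) = Fintype.linearCombination ℝ v '' Ici 0 := by
    ext x
    simp [mem_hull_range_iff, Fintype.linearCombination_apply]
  rw [himage]
  exact hv'.isClosedMap _ isClosed_Ici

theorem isClosed_hull_range {ι : Type*} [Finite ι] (v : ι → E) :
    IsClosed (hull ℝ (range v) : Set E) := by
  induction h : Nat.card ι using Nat.strong_induction_on generalizing ι with
  | _ n ih =>
    by_cases hv : LinearIndependent ℝ v
    · exact isClosed_hull_range_of_linearIndependent hv
    rw [hull_range_eq_iUnion_of_not_linearIndependent hv]
    exact isClosed_iUnion_of_finite fun j =>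
      ih _ (h ▸ Finite.card_subtype_lt (not_not_intro rfl)) _ rfl

theorem isClosed_of_fg {C : PointedCone ℝ E} (hC : C.FG) : IsClosed (C : Set E) := by
  obtain ⟨s, rfl⟩ := hC
  simpa using isClosed_hull_range ((↑) : s → E)

end Topology

end PointedCone

section InnerProductSpace

open PointedCone

variable {E : Type*} [NormedAddCommGroup E] [InnerProductSpace ℝ E]

theorem mem_hull_of_forall_inner_nonneg [CompleteSpace E] {s : Set E} (hs : s.Finite) {g : E}
    (h : ∀ d, (∀ x ∈ s, 0 ≤ ⟪x, d⟫) → 0 ≤ ⟪g, d⟫) : g ∈ hull ℝ s := by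
  by_contra hg
  let C : ProperCone ℝ E := ⟨hull ℝ s, isClosed_of_fg (Submodule.fg_span hs)⟩
  obtain ⟨d, hC, hgd⟩ := C.hyperplane_separation' hg
  exact hgd.not_ge (h d fun x hx => hC x (subset_hull hx))

theorem exists_pos_forall_inner_add_smul_le {ι : Type*} [Finite ι] {a : ι → E} {b : ι → ℝ}
    {z d : E} (hz : ∀ i, ⟪a i, z⟫ ≤ b i) (hd : ∀ i, ⟪a i, z⟫ = b i → ⟪a i, d⟫ ≤ 0) :
    ∃ t : ℝ, 0 < t ∧ ∀ i, ⟪a i, z + t • d⟫ ≤ b i := by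
  have hnear : ∀ i, ∀ᶠ t in 𝓝[>] (0 : ℝ), ⟪a i, z + t • d⟫ ≤ b i := by
    intro i
    rcases (hz i).lt_or_eq with hlt | heq
    · have hcont : Continuous fun t : ℝ => ⟪a i, z + t • d⟫ := by fun_prop
      refine nhdsWithin_le_nhds ?_
      filter_upwards [hcont.continuousAt.eventually_lt continuousAt_const (by simpa using hlt)]
        with t ht using ht.le
    · filter_upwards [self_mem_nhdsWithin] with t (ht : 0 < t)
      rw [inner_add_right, real_inner_smul_right, heq]
      nlinarith [hd i heq]
  obtain ⟨t, hfeas, ht⟩ := ((Filter.eventually_all.2 hnear).and self_mem_nhdsWithin).exists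
  exact ⟨t, ht, hfeas⟩

theorem IsMinOn.exists_lagrange_multiplier_inner [CompleteSpace E] {ι : Type*} [Finite ι]
    {a : ι → E} {b : ι → ℝ} {u v z : E} (hz : ∀ i, ⟪a i, z⟫ ≤ b i)
    (hmin : IsMinOn (⟪u, ·⟫) {w | (∀ i, ⟪a i, w⟫ ≤ b i) ∧ ⟪v, w⟫ = ⟪v, z⟫} z) :
    ∃ μ : ℝ, IsMinOn (fun w => ⟪u, w⟫ - μ * ⟪v, w⟫) {w | ∀ i, ⟪a i, w⟫ ≤ b i} z := by
  set S : Set E := range fun i : {i // ⟪a i, z⟫ = b i} => -a i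
  -- `±v` encode the equality constraint; the multiplier is the difference of their coefficients
  have hu : u ∈ hull ℝ (insert v (insert (-v) S)) := by
    refine mem_hull_of_forall_inner_nonneg (((finite_range _).insert _).insert _) fun d hd => ?_
    have hvd : ⟪v, d⟫ = 0 :=
      le_antisymm (by simpa using hd (-v) (by simp)) (hd v (mem_insert _ _))
    obtain ⟨t, ht, hfeas⟩ := exists_pos_forall_inner_add_smul_le hz fun i hi => by
      simpa using hd (-a i) (mem_insert_of_mem _ (mem_insert_of_mem _ ⟨⟨i, hi⟩, rfl⟩))
    have := isMinOn_iff.1 hmin (z + t • d)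
      ⟨hfeas, by rw [inner_add_right, real_inner_smul_right, hvd, mul_zero, add_zero]⟩
    rw [inner_add_right, real_inner_smul_right] at this
    nlinarith
  obtain ⟨α, y, hy, rfl⟩ := Submodule.mem_span_insert.1 hu
  obtain ⟨β, x, hx, rfl⟩ := Submodule.mem_span_insert.1 hy
  refine ⟨α - β, isMinOn_iff.2 fun w hw => ?_⟩
  have hxw : 0 ≤ ⟪x, w - z⟫ := by
    suffices hull ℝ S ≤ (ProperCone.innerDual {w - z} : PointedCone ℝ E) by
      simpa [real_inner_comm] using this hx
    refine Submodule.span_le.2 ?_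
    rintro _ ⟨⟨i, hi⟩, rfl⟩
    simpa [real_inner_comm (a i), inner_sub_right, hi] using hw i
  simp only [← Nonneg.coe_smul, inner_add_left, real_inner_smul_left, inner_neg_left,
    inner_sub_right] at hxw ⊢
  nlinarith

end InnerProductSpace

theorem exists_inner_apply_eq {V E : Type*} [AddCommGroup V] [Module ℝ V] [NormedAddCommGroup E]
    [InnerProductSpace ℝ E] [FiniteDimensional ℝ E] (e : V ≃ₗ[ℝ] E) (g : V →ₗ[ℝ] ℝ) :
    ∃ u : E, ∀ x, ⟪u, e x⟫ = g x :=
  ⟨(InnerProductSpace.toDual ℝ E).symm (g ∘ₗ e.symm.toLinearMap).toContinuousLinearMap,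
    fun x => by simp⟩

section FiniteDimensional

variable {V : Type*} [AddCommGroup V] [Module ℝ V] [FiniteDimensional ℝ V]

theorem IsMinOn.exists_lagrange_multiplier {ι : Type*} [Finite ι] {a : V →ₗ[ℝ] ι → ℝ}
    {b : ι → ℝ} {f p : V →ₗ[ℝ] ℝ} {z : V} (hz : a z ≤ b)
    (hmin : IsMinOn f {w | a w ≤ b ∧ p w = p z} z) :
    ∃ μ : ℝ, IsMinOn (fun w => f w - μ * p w) {w | a w ≤ b} z := by
  let e : V ≃ₗ[ℝ] EuclideanSpace ℝ (Fin (Module.finrank ℝ V)) :=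
    (Module.finBasis ℝ V).equivFun.trans (WithLp.linearEquiv 2 ℝ _).symm
  choose grad hgrad using exists_inner_apply_eq e
  have hfeas : ∀ w, a w ≤ b ↔ ∀ i, ⟪grad (.proj i ∘ₗ a), e w⟫ ≤ b i := by
    simp [hgrad, Pi.le_def]
  obtain ⟨μ, hμ⟩ := IsMinOn.exists_lagrange_multiplier_inner (u := grad f) (v := grad p)
    ((hfeas z).1 hz) <| isMinOn_iff.2 <| e.surjective.forall.2 fun w hw => by
      simpa [hgrad] using isMinOn_iff.1 hmin w ⟨(hfeas w).2 hw.1, by simpa [hgrad] using hw.2⟩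
  exact ⟨μ, isMinOn_iff.2 fun w hw => by
    simpa [hgrad] using isMinOn_iff.1 hμ (e w) ((hfeas w).1 hw)⟩

theorem exists_tradeoff_bound {ι : Type*} [Finite ι] {a : V →ₗ[ℝ] ι → ℝ} {b : ι → ℝ}
    {f p : V →ₗ[ℝ] ℝ} {z : V} (hz : a z ≤ b) (hmin : IsMinOn f {w | a w ≤ b ∧ p w = p z} z) :
    ∃ M : ℝ, ∀ w, a w ≤ b → p z < p w → (f z - f w) / (p w - p z) ≤ M := by
  obtain ⟨μ, hμ⟩ := hmin.exists_lagrange_multiplier hz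
  exact ⟨-μ, fun w hw hpw =>
    (div_le_iff₀ (sub_pos.2 hpw)).2 (by linarith [isMinOn_iff.1 hμ w hw])⟩

end FiniteDimensional

theorem linear_efficient_is_properly_efficient_general {n m : ℕ}
    (A : Matrix (Fin m) (Fin n) ℝ) (b : Fin m → ℝ)
    (f p : (Fin n → ℝ) →ₗ[ℝ] ℝ)
    (Γ : Set (Fin n → ℝ)) (hΓdef : Γ = {w | A.mulVec w ≤ b})
    (z : Fin n → ℝ) (hz : z ∈ Γ)
    (heff : ¬ ∃ w ∈ Γ, f w ≤ f z ∧ p w ≤ p z ∧ (f w < f z ∨ p w < p z)) :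
    ∃ Lbar : ℝ, 0 < Lbar ∧
      (∀ w ∈ Γ, f w < f z → p z < p w →
        (f z - f w) / (p w - p z) ≤ Lbar) ∧
      (∀ w ∈ Γ, p w < p z → f z < f w →
        (p z - p w) / (f w - f z) ≤ Lbar) := by
  subst hΓdef
  obtain ⟨M, hM⟩ := exists_tradeoff_bound (a := A.mulVecLin) hz <| isMinOn_iff.2
    fun w ⟨hw, hpw⟩ => not_lt.1 fun hlt => heff ⟨w, hw, hlt.le, hpw.le, .inl hlt⟩
  obtain ⟨N, hN⟩ := exists_tradeoff_bound (a := A.mulVecLin) hz <| isMinOn_iff.2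
    fun w ⟨hw, hfw⟩ => not_lt.1 fun hlt => heff ⟨w, hw, hfw.le, hlt.le, .inr hlt⟩
  refine ⟨max 1 (max M N), lt_max_of_lt_left one_pos, fun w hw _ hpw => ?_, fun w hw _ hfw => ?_⟩
  · exact (hM w hw hpw).trans (le_max_of_le_right (le_max_left _ _))
  · exact (hN w hw hfw).trans (le_max_of_le_right (le_max_right _ _))

/-- In the linear case every efficient solution is properly efficient: for a
nonempty polyhedron `Γ = {w : A·w ≤ b}` and linear objectives `f, p`, every
efficient point of the bicriteria problem `(min f, min p)` has bounded
trade-offs. -/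
theorem linear_efficient_is_properly_efficient {n m : ℕ}
    (A : Matrix (Fin m) (Fin n) ℝ) (b : Fin m → ℝ)
    (f p : (Fin n → ℝ) →ₗ[ℝ] ℝ)
    (Γ : Set (Fin n → ℝ)) (hΓdef : Γ = {w | A.mulVec w ≤ b})
    (hΓne : Γ.Nonempty) (z : Fin n → ℝ) (hz : z ∈ Γ)
    (heff : ¬ ∃ w ∈ Γ, f w ≤ f z ∧ p w ≤ p z ∧ (f w < f z ∨ p w < p z)) :
    ∃ Lbar : ℝ, 0 < Lbar ∧
      (∀ w ∈ Γ, f w < f z → p z < p w →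
        (f z - f w) / (p w - p z) ≤ Lbar) ∧
      (∀ w ∈ Γ, p w < p z → f z < f w →
        (p z - p w) / (f w - f z) ≤ Lbar) :=
  linear_efficient_is_properly_efficient_general A b f p Γ hΓdef z hz heff
end
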